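/- Let v_1, …, v_d ∈ ℤ^n be linearly independent integer vectors (n ≥ d). Then the set of lattice points in the relative interior of the real cone generated by v_1, …, v_d is the disjoint union, over all atomic lattice points z in the half-open fundamental simplex, of the translated discrete cones z + cone_ℤ(v_1, …, v_{level(z)}). -/

import Mathlib

/-- A coefficient vector `mu ∈ ℝ^d_{>0}` (of a lattice point) is atomic iff
`mu j ≤ 1` for all indices `j` preceding its level `⌈∑ i, mu i⌉`. -/
def AtomicCoeff {d : ℕ} (mu : Fin d → ℝ) : Prop :=
  ∀ j : Fin d, ((j : ℕ) + 1 : ℤ) < ⌈∑ i, mu i⌉ → mu j ≤ 1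

/-!
By linear independence, the coefficient vector `λ` of a lattice point in the open cone is
unique, and the theorem becomes a statement about splittings `λ = α + μ` with `α > 0` atomic
and `μ ∈ ℕ^d` supported below the level `k = ⌈∑ α⌉`; the lattice condition on `α` is then
free, and atomicity alone forces `∑ α ≤ d`.
In such a splitting `μ i = ⌈λ i⌉ - 1` for `i + 1 < k`, `μ i = 0` for `i ≥ k`, and
`k = ⌈∑ λ⌉ - ∑ μ`. Comparing two splittings, a lower level forces a pointwise smaller `μ`,
hence a higher level; so the levels agree, and then so do the `μ`. For existence, take `k`
minimal with `⌈∑ λ⌉ ≤ ∑_{i < k} (⌈λ i⌉ - 1) + k`, set `μ i = ⌈λ i⌉ - 1` for `i + 1 < k`, and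
put the remainder at index `k - 1`.
-/

open Finset

lemma Int.ceil_sum_sub_intCast {ι : Type*} (s : Finset ι) (a : ι → ℝ) (m : ι → ℤ) :
    ⌈∑ i ∈ s, (a i - m i)⌉ = ⌈∑ i ∈ s, a i⌉ - ∑ i ∈ s, m i := by
  rw [sum_sub_distrib, ← Int.cast_sum, Int.ceil_sub_intCast]

lemma Int.ceil_sum_le_sum_ceil {ι : Type*} (s : Finset ι) (a : ι → ℝ) :
    ⌈∑ i ∈ s, a i⌉ ≤ ∑ i ∈ s, ⌈a i⌉ :=
  Int.ceil_le.2 <| by push_cast; exact sum_le_sum fun i _ => Int.le_ceil (a i)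

lemma Fin.sum_filter_val_lt_succ {M : Type*} [AddCommMonoid M] {d : ℕ} (f : Fin d → M)
    (i : Fin d) :
    ∑ j : Fin d with j.val < i.val + 1, f j = ∑ j : Fin d with j.val < i.val, f j + f i := by
  have : univ.filter (fun j : Fin d => j.val < i.val + 1) =
      insert i (univ.filter fun j : Fin d => j.val < i.val) := by
    ext j
    simp only [mem_filter, mem_insert, mem_univ, true_and, Fin.ext_iff]
    omega
  rw [this, sum_insert (by simp), add_comm]

lemma Fintype.eq_of_sum_eq_of_forall_ne {ι M : Type*} [Fintype ι] [DecidableEq ι]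
    [AddCancelCommMonoid M] {f g : ι → M} (a : ι) (h : ∀ i ≠ a, f i = g i)
    (hs : ∑ i, f i = ∑ i, g i) : f = g := by
  funext i
  by_cases hi : i = a
  · subst hi
    rw [← add_sum_erase _ f (mem_univ i), ← add_sum_erase _ g (mem_univ i),
      Finset.sum_congr rfl fun j hj => h j (ne_of_mem_erase hj)] at hs
    exact add_right_cancel hs
  · exact h i hi

lemma LinearIndependent.eq_of_sum_mul_eq {ι κ R : Type*} [Fintype ι] [CommRing R]
    {w : ι → κ → R} (hw : LinearIndependent R w) {a b : ι → R}
    (h : ∀ j, ∑ i, a i * w i j = ∑ i, b i * w i j) : a = b :=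
  funext <| Fintype.linearIndependent_iffₛ.1 hw a b <| funext fun j => by
    simpa only [Finset.sum_apply, Pi.smul_apply, smul_eq_mul] using h j

section

variable {d : ℕ}

lemma AtomicCoeff.sum_le {α : Fin d → ℝ} (h : AtomicCoeff α) : ∑ i, α i ≤ d := by
  by_contra! hd
  have hle : ∀ j : Fin d, α j ≤ 1 := fun j =>
    h j <| (show ((j : ℕ) + 1 : ℤ) ≤ d by exact_mod_cast j.isLt).trans_lt
      (Int.lt_ceil.2 (by exact_mod_cast hd))
  have := sum_le_sum fun j (_ : j ∈ univ) => hle j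
  simp only [sum_const, card_univ, Fintype.card_fin, nsmul_eq_mul, mul_one] at this
  linarith

structure IsAtomicDecomp (lam α : Fin d → ℝ) (μ : Fin d → ℕ) : Prop where
  pos : ∀ i, 0 < α i
  atomic : AtomicCoeff α
  support : ∀ i : Fin d, ⌈∑ j, α j⌉ < (i : ℕ) + 1 → μ i = 0
  add_eq : ∀ i, lam i = α i + μ i

namespace IsAtomicDecomp

variable {lam α β : Fin d → ℝ} {μ ν : Fin d → ℕ}

lemma ceil_sum_eq (h : IsAtomicDecomp lam α μ) :
    ⌈∑ i, α i⌉ = ⌈∑ i, lam i⌉ - ∑ i, (μ i : ℤ) := by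
  rw [← Int.ceil_sum_sub_intCast]
  congr 2 with i
  push_cast
  linarith [h.add_eq i]

lemma natCast_lt_ceil (h : IsAtomicDecomp lam α μ) (i : Fin d) : (μ i : ℤ) < ⌈lam i⌉ :=
  Int.lt_ceil.2 <| by push_cast; linarith [h.add_eq i, h.pos i]

lemma natCast_eq_ceil_sub_one (h : IsAtomicDecomp lam α μ) {i : Fin d}
    (hi : ((i : ℕ) + 1 : ℤ) < ⌈∑ j, α j⌉) : (μ i : ℤ) = ⌈lam i⌉ - 1 := by
  rw [eq_sub_iff_add_eq, eq_comm, Int.ceil_eq_iff]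
  push_cast
  constructor <;> linarith [h.add_eq i, h.pos i, h.atomic i hi]

lemma le_of_lt_or_lt (hα : IsAtomicDecomp lam α μ) (hβ : IsAtomicDecomp lam β ν) {i : Fin d}
    (hi : ((i : ℕ) + 1 : ℤ) < ⌈∑ j, β j⌉ ∨ ⌈∑ j, α j⌉ < (i : ℕ) + 1) : μ i ≤ ν i := by
  rcases hi with hi | hi
  · have := hα.natCast_lt_ceil i
    have := hβ.natCast_eq_ceil_sub_one hi
    omega
  · simp [hα.support i hi]

lemma ceil_sum_le (hα : IsAtomicDecomp lam α μ) (hβ : IsAtomicDecomp lam β ν) :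
    ⌈∑ j, β j⌉ ≤ ⌈∑ j, α j⌉ := by
  by_contra! hlt
  have hle : ∑ i, (μ i : ℤ) ≤ ∑ i, (ν i : ℤ) := sum_le_sum fun i _ => by
    exact_mod_cast hα.le_of_lt_or_lt hβ (by omega)
  have := hα.ceil_sum_eq
  have := hβ.ceil_sum_eq
  omega

theorem unique (hα : IsAtomicDecomp lam α μ) (hβ : IsAtomicDecomp lam β ν) : α = β := by
  have hk : ⌈∑ j, α j⌉ = ⌈∑ j, β j⌉ := le_antisymm (hβ.ceil_sum_le hα) (hα.ceil_sum_le hβ)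
  have hsum : ∑ i, μ i = ∑ i, ν i := by
    have := hα.ceil_sum_eq
    have := hβ.ceil_sum_eq
    exact_mod_cast (show ∑ i, (μ i : ℤ) = ∑ i, (ν i : ℤ) by omega)
  have hne : ∀ i : Fin d, ((i : ℕ) + 1 : ℤ) ≠ ⌈∑ j, α j⌉ → μ i = ν i := fun i hi =>
    le_antisymm (hα.le_of_lt_or_lt hβ (by omega)) (hβ.le_of_lt_or_lt hα (by omega))
  have hμν : μ = ν := by
    funext i
    by_cases hi : ((i : ℕ) + 1 : ℤ) = ⌈∑ j, α j⌉
    · refine congrFun (Fintype.eq_of_sum_eq_of_forall_ne i (fun j hj => hne j ?_) hsum) i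
      rwa [← hi, ne_eq, add_left_inj, Nat.cast_inj, Fin.val_inj]
    · exact hne i hi
  subst hμν
  funext i
  linarith [hα.add_eq i, hβ.add_eq i]

end IsAtomicDecomp

lemma isAtomicDecomp_sub_toNat {lam : Fin d → ℝ} (μ : Fin d → ℤ) (h0 : ∀ i, 0 ≤ μ i)
    (hlt : ∀ i, μ i < ⌈lam i⌉)
    (hat : ∀ i : Fin d, ((i : ℕ) + 1 : ℤ) < ⌈∑ j, lam j⌉ - ∑ j, μ j → μ i = ⌈lam i⌉ - 1)
    (hsupp : ∀ i : Fin d, ⌈∑ j, lam j⌉ - ∑ j, μ j < (i : ℕ) + 1 → μ i = 0) :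
    IsAtomicDecomp lam (fun i => lam i - μ i) (fun i => (μ i).toNat) := by
  have hcast (i : Fin d) : (((μ i).toNat : ℕ) : ℝ) = μ i := by
    rw [← Int.cast_natCast, Int.toNat_of_nonneg (h0 i)]
  have hk := Int.ceil_sum_sub_intCast univ lam μ
  refine ⟨fun i => sub_pos.2 (Int.lt_ceil.1 (hlt i)), fun j hj => ?_, fun i hi => ?_,
    fun i => by simp only [hcast, sub_add_cancel]⟩
  · have hμj : (μ j : ℝ) = ⌈lam j⌉ - 1 := by exact_mod_cast hat j (hk ▸ hj)
    linarith [Int.le_ceil (lam j)]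
  · simp [hsupp i (hk ▸ hi)]

theorem exists_isAtomicDecomp {lam : Fin d → ℝ} (hlam : ∀ i, 0 < lam i) :
    ∃ α μ, IsAtomicDecomp lam α μ := by
  rcases isEmpty_or_nonempty (Fin d) with hd | hd
  · exact ⟨lam, 0, isEmptyElim, isEmptyElim, isEmptyElim, isEmptyElim⟩
  set S := ⌈∑ i, lam i⌉
  set c : Fin d → ℤ := fun i => ⌈lam i⌉ - 1
  set P : ℕ → ℤ := fun m => ∑ i : Fin d with i.val < m, c i
  have hc (i : Fin d) : 0 ≤ c i := sub_nonneg.2 (Int.one_le_ceil_iff.2 (hlam i))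
  have hP0 : P 0 = 0 := by simp [P]
  have hP_of_le {m : ℕ} (hm : d ≤ m) : P m = ∑ i, c i :=
    sum_congr (filter_true_of_mem fun i _ => i.isLt.trans_le hm) fun _ _ => rfl
  have hS_pos : 0 < S := Int.ceil_pos.2 (sum_pos (fun i _ => hlam i) univ_nonempty)
  have hS_le : S ≤ ∑ i, c i + d := by
    simpa [c] using Int.ceil_sum_le_sum_ceil univ lam
  obtain ⟨m, hm, hm1⟩ := Nat.exists_not_and_succ_of_not_zero_of_exists
    (p := fun m : ℕ => S ≤ P m + m) (by simpa [hP0] using hS_pos) ⟨d, by rwa [hP_of_le le_rfl]⟩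
  simp only [not_le] at hm hm1
  have hmd : m < d := by
    by_contra! h
    rw [hP_of_le h] at hm
    omega
  obtain ⟨i₀, rfl⟩ : ∃ i₀ : Fin d, i₀.val = m := ⟨⟨m, hmd⟩, rfl⟩
  have hPm1 : P (i₀ + 1) = P i₀ + c i₀ := Fin.sum_filter_val_lt_succ c i₀
  set t := S - P i₀ - (i₀ + 1)
  set μ : Fin d → ℤ := fun i => (if i.val < i₀ then c i else 0) + (Pi.single i₀ t : Fin d → ℤ) i
  have hμsum : ∑ i, μ i = P i₀ + t := by
    simp only [μ, sum_add_distrib, ← sum_filter, Fintype.sum_pi_single']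
    rfl
  have hμ (i : Fin d) : μ i = if i.val < i₀ then c i else if i = i₀ then t else 0 := by
    by_cases h : i = i₀
    · subst h
      simp [μ]
    · simp [μ, h]
  obtain ⟨h0, hle, hat, hsupp⟩ : (∀ i, 0 ≤ μ i) ∧ (∀ i, μ i ≤ c i) ∧
      (∀ i : Fin d, i.val < i₀ → μ i = c i) ∧ (∀ i : Fin d, i₀.val < i → μ i = 0) := by
    refine ⟨fun i => ?_, fun i => ?_, fun i hi => ?_, fun i hi => ?_⟩ <;> rw [hμ i] <;>
      split_ifs <;> subst_vars <;> first | omega | exact hc i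
  exact ⟨_, _, isAtomicDecomp_sub_toNat μ h0 (fun i => (hle i).trans_lt (sub_one_lt _))
    (fun i hi => hat i (by omega)) (fun i hi => hsupp i (by omega))⟩

theorem existsUnique_isAtomicDecomp {lam : Fin d → ℝ} (hlam : ∀ i, 0 < lam i) :
    ∃! α, ∃ μ, IsAtomicDecomp lam α μ :=
  let ⟨α, μ, h⟩ := exists_isAtomicDecomp hlam
  ⟨α, ⟨μ, h⟩, fun _ ⟨_, h'⟩ => h'.unique h⟩

end

theorem partition_open_cone_general (d n : ℕ) (v : Fin d → Fin n → ℤ)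
    (hv : LinearIndependent ℝ fun i => fun j => ((v i j : ℝ))) (x : Fin n → ℤ) :
    (∃ lam : Fin d → ℝ, (∀ i, 0 < lam i) ∧
        ∀ j : Fin n, (x j : ℝ) = ∑ i, lam i * (v i j : ℝ)) ↔
      ∃! α : Fin d → ℝ,
        ((∀ i, 0 < α i) ∧ (∑ i, α i ≤ (d : ℝ)) ∧
          (∀ j : Fin n, ∃ z : ℤ, (∑ i, α i * (v i j : ℝ)) = (z : ℝ)) ∧
          AtomicCoeff α) ∧
        ∃ μ : Fin d → ℕ, (∀ i : Fin d, ⌈∑ j, α j⌉ < (i : ℕ) + 1 → μ i = 0) ∧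
          ∀ j : Fin n, (x j : ℝ) = (∑ i, α i * (v i j : ℝ)) + ∑ i, (μ i : ℝ) * (v i j : ℝ) := by
  constructor
  · rintro ⟨lam, hlam, hx⟩
    obtain ⟨α, ⟨μ, hα⟩, huniq⟩ := existsUnique_isAtomicDecomp hlam
    have hx' (j : Fin n) :
        (x j : ℝ) = (∑ i, α i * (v i j : ℝ)) + ∑ i, (μ i : ℝ) * (v i j : ℝ) := by
      simp only [hx j, hα.add_eq, add_mul, sum_add_distrib]
    refine ⟨α, ⟨⟨hα.pos, hα.atomic.sum_le, fun j => ⟨x j - ∑ i, μ i * v i j, ?_⟩, hα.atomic⟩,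
      μ, hα.support, hx'⟩, ?_⟩
    · push_cast
      linarith [hx' j]
    rintro β ⟨⟨hβ_pos, -, -, hβ_atomic⟩, ν, hν_support, hβx⟩
    have hlam_eq : (fun i => β i + ν i) = lam := hv.eq_of_sum_mul_eq fun j => by
      simp only [add_mul, sum_add_distrib]
      rw [← hx j, hβx j]
    exact huniq β ⟨ν, hβ_pos, hβ_atomic, hν_support, fun i => by rw [← hlam_eq]⟩
  · rintro ⟨α, ⟨⟨hα_pos, -⟩, μ, -, hx⟩, -⟩
    exact ⟨fun i => α i + μ i, fun i => add_pos_of_pos_of_nonneg (hα_pos i) (Nat.cast_nonneg _),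
      fun j => by simp only [hx, add_mul, sum_add_distrib]⟩

/-- Partition theorem: for linearly independent `v 0, …, v (d-1) ∈ ℤ^n`, the lattice
points in the relative interior of the real cone over the `v i` are exactly the points
of the translated discrete cones `z + cone_ℤ(v 0, …, v (level z - 1))` for atomic
lattice points `z` of the half-open fundamental simplex, and this union is disjoint:
every such lattice point lies in the discrete cone of a *unique* atomic point. -/
theorem partition_open_cone (d n : ℕ) (hdn : d ≤ n) (v : Fin d → Fin n → ℤ)
    (hv : LinearIndependent ℝ fun i => fun j => ((v i j : ℝ))) (x : Fin n → ℤ) :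
    (∃ lam : Fin d → ℝ, (∀ i, 0 < lam i) ∧
        ∀ j : Fin n, (x j : ℝ) = ∑ i, lam i * (v i j : ℝ)) ↔
      ∃! α : Fin d → ℝ,
        ((∀ i, 0 < α i) ∧ (∑ i, α i ≤ (d : ℝ)) ∧
          (∀ j : Fin n, ∃ z : ℤ, (∑ i, α i * (v i j : ℝ)) = (z : ℝ)) ∧
          AtomicCoeff α) ∧
        ∃ μ : Fin d → ℕ, (∀ i : Fin d, ⌈∑ j, α j⌉ < (i : ℕ) + 1 → μ i = 0) ∧
          ∀ j : Fin n, (x j : ℝ) = (∑ i, α i * (v i j : ℝ)) + ∑ i, (μ i : ℝ) * (v i j : ℝ) :=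
  partition_open_cone_general d n v hv x
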